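/- arXiv:2008.12730 — 2 statements merged into one kernel-verified Lean document; each statement's English description precedes it below -/
import Mathlib

section
/- Let $V$ be a real Hilbert space, $a$ a bounded, coercive bilinear form on $V$ with coercivity constant $m>0$, and $j:V\times V\to\mathbb{R}$ satisfying the Lipschitz-type bound $j(\eta_1,v_2)-j(\eta_1,v_1)+j(\eta_2,v_1)-j(\eta_2,v_2)\le\alpha\|\eta_1-\eta_2\|\|v_1-v_2\|$ with $\alpha<m$. For $f\in V$, let $u(f)$ denote the solution of $a(u,v-u)+j(u,v)-j(u,u)\ge\langle f,v-u\rangle$ for all $v\in V$ (assumed to exist and be unique for each $f$). Then $\|u(f_1)-u(f_2)\|\le\frac{1}{m-\alpha}\|f_1-f_2\|$ for all $f_1,f_2\in V$; i.e. the solution map is Lipschitz continuous. -/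
/-!
Test the inequality for `u₁ = S f₁` with `v = u₂` and the one for `u₂ = S f₂` with `v = u₁`,
and add them: the bilinear terms combine to `-a (u₁ - u₂) (u₁ - u₂)`, the `j`-terms are bounded
by `α ‖u₁ - u₂‖²`, and the right-hand sides to `-⟪f₁ - f₂, u₁ - u₂⟫`. Coercivity then gives
`(m - α) ‖u₁ - u₂‖² ≤ ‖f₁ - f₂‖ ‖u₁ - u₂‖`, and `α < m` lets us divide.
-/

open RealInnerProductSpace

section QuasiVariationalInequality

variable {V : Type*} [NormedAddCommGroup V] [InnerProductSpace ℝ V]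
  {a : V →ₗ[ℝ] V →ₗ[ℝ] ℝ} {j : V → V → ℝ} {m α : ℝ} {f₁ f₂ u₁ u₂ : V}

def IsQVISolution (a : V →ₗ[ℝ] V →ₗ[ℝ] ℝ) (j : V → V → ℝ) (f u : V) : Prop :=
  ∀ v : V, ⟪f, v - u⟫ ≤ a u (v - u) + j u v - j u u

theorem IsQVISolution.mul_norm_sub_sq_le_inner
    (hcoer : ∀ v : V, m * ‖v‖ ^ 2 ≤ a v v)
    (hj : ∀ η₁ η₂ v₁ v₂ : V,
      j η₁ v₂ - j η₁ v₁ + j η₂ v₁ - j η₂ v₂ ≤ α * ‖η₁ - η₂‖ * ‖v₁ - v₂‖)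
    (h₁ : IsQVISolution a j f₁ u₁) (h₂ : IsQVISolution a j f₂ u₂) :
    (m - α) * ‖u₁ - u₂‖ ^ 2 ≤ ⟪f₁ - f₂, u₁ - u₂⟫ := by
  have hsum := add_le_add (h₁ u₂) (h₂ u₁)
  have ha : a u₁ (u₂ - u₁) + a u₂ (u₁ - u₂) = -a (u₁ - u₂) (u₁ - u₂) := by
    simp only [map_sub, LinearMap.sub_apply]
    ring
  have hf : ⟪f₁, u₂ - u₁⟫ + ⟪f₂, u₁ - u₂⟫ = -⟪f₁ - f₂, u₁ - u₂⟫ := by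
    simp only [inner_sub_left, inner_sub_right]
    ring
  have hju := hj u₁ u₂ u₁ u₂
  nlinarith [hcoer (u₁ - u₂)]

theorem IsQVISolution.norm_sub_le
    (hcoer : ∀ v : V, m * ‖v‖ ^ 2 ≤ a v v)
    (hj : ∀ η₁ η₂ v₁ v₂ : V,
      j η₁ v₂ - j η₁ v₁ + j η₂ v₁ - j η₂ v₂ ≤ α * ‖η₁ - η₂‖ * ‖v₁ - v₂‖)
    (hαm : α < m) (h₁ : IsQVISolution a j f₁ u₁) (h₂ : IsQVISolution a j f₂ u₂) :
    ‖u₁ - u₂‖ ≤ (1 / (m - α)) * ‖f₁ - f₂‖ := by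
  have hmα : 0 < m - α := sub_pos.mpr hαm
  rw [one_div_mul_eq_div, le_div_iff₀ hmα]
  rcases (norm_nonneg (u₁ - u₂)).eq_or_lt with hd | hd
  · rw [← hd, zero_mul]
    exact norm_nonneg _
  · refine le_of_mul_le_mul_right ?_ hd
    calc ‖u₁ - u₂‖ * (m - α) * ‖u₁ - u₂‖ = (m - α) * ‖u₁ - u₂‖ ^ 2 := by ring
      _ ≤ ⟪f₁ - f₂, u₁ - u₂⟫ := h₁.mul_norm_sub_sq_le_inner hcoer hj h₂
      _ ≤ ‖f₁ - f₂‖ * ‖u₁ - u₂‖ := real_inner_le_norm _ _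

end QuasiVariationalInequality

theorem stmt9_general {V : Type*} [NormedAddCommGroup V] [InnerProductSpace ℝ V]
    (a : V →ₗ[ℝ] V →ₗ[ℝ] ℝ) (m : ℝ)
    (hcoer : ∀ v : V, m * ‖v‖ ^ 2 ≤ a v v)
    (j : V → V → ℝ) (α : ℝ) (hαm : α < m)
    (hj : ∀ η₁ η₂ v₁ v₂ : V,
      j η₁ v₂ - j η₁ v₁ + j η₂ v₁ - j η₂ v₂ ≤ α * ‖η₁ - η₂‖ * ‖v₁ - v₂‖)
    (S : V → V)
    (hS : ∀ f : V, ∀ v : V, a (S f) (v - S f) + j (S f) v - j (S f) (S f) ≥ ⟪f, v - S f⟫) :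
    ∀ f₁ f₂ : V, ‖S f₁ - S f₂‖ ≤ (1 / (m - α)) * ‖f₁ - f₂‖ :=
  fun f₁ f₂ => IsQVISolution.norm_sub_le hcoer hj hαm (hS f₁) (hS f₂)

theorem stmt9 {V : Type*} [NormedAddCommGroup V] [InnerProductSpace ℝ V] [CompleteSpace V]
    (a : V →ₗ[ℝ] V →ₗ[ℝ] ℝ) (M m : ℝ)
    (hbound : ∀ u v : V, |a u v| ≤ M * ‖u‖ * ‖v‖)
    (hm : 0 < m) (hcoer : ∀ v : V, m * ‖v‖ ^ 2 ≤ a v v)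
    (j : V → V → ℝ) (α : ℝ) (hα : 0 ≤ α) (hαm : α < m)
    (hj : ∀ η₁ η₂ v₁ v₂ : V,
      j η₁ v₂ - j η₁ v₁ + j η₂ v₁ - j η₂ v₂ ≤ α * ‖η₁ - η₂‖ * ‖v₁ - v₂‖)
    (S : V → V)
    (hS : ∀ f : V, ∀ v : V, a (S f) (v - S f) + j (S f) v - j (S f) (S f) ≥ ⟪f, v - S f⟫)
    (hSuniq : ∀ f u : V,
      (∀ v : V, a u (v - u) + j u v - j u u ≥ ⟪f, v - u⟫) → u = S f) :
    ∀ f₁ f₂ : V, ‖S f₁ - S f₂‖ ≤ (1 / (m - α)) * ‖f₁ - f₂‖ :=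
  stmt9_general a m hcoer j α hαm hj S hS
end

section
/- Let $V$ be a real Hilbert space, $a$ a bounded coercive bilinear form with constant $m>0$, and $j:V\times V\to\mathbb{R}$ with the Lipschitz-type bound with constant $\alpha<m$ (as in the quasivariational setting), nonnegative: $j(\eta,v)\ge 0$. Suppose for each $n$, $(u_n,f_n)$ satisfies: $u_n$ solves the quasivariational inequality with right-hand side $\langle F_0,\cdot\rangle+\langle B f_n,\cdot\rangle$, where $B:Y\to V$ is a compact linear operator from a Hilbert space $Y$, and $f_n\rightharpoonup f$ weakly in $Y$. If $u$ solves the quasivariational inequality with right-hand side $\langle F_0,\cdot\rangle+\langle Bf,\cdot\rangle$, then $\langle Bf_n, u_n-u\rangle\to 0$ and $u_n\to u$ strongly in $V$. -/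
/-!
The solution of the quasivariational inequality depends Lipschitz-continuously on the right-hand
side: testing the inequalities for `u₁` and `u₂` against each other, coercivity of `a` and the
bound on `j` give `(m - α) ‖u₁ - u₂‖ ≤ ‖F₁ - F₂‖`. It therefore suffices that `B fₙ → B f` in norm,
which holds because the weakly convergent sequence `fₙ` is bounded (Banach–Steinhaus), so `B fₙ`
lies in a compact set, and every limit of a subsequence of `B fₙ` must be the weak limit `B f`.
-/

open RealInnerProductSpace Filter Topology

section WeakConvergence

variable {E F : Type*} [NormedAddCommGroup E] [InnerProductSpace ℝ E] [CompleteSpace E]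
  [NormedAddCommGroup F] [InnerProductSpace ℝ F]

theorem exists_norm_le_of_tendsto_inner {x : ℕ → E} {y : E}
    (h : ∀ v, Tendsto (fun n => ⟪x n, v⟫) atTop (𝓝 ⟪y, v⟫)) : ∃ R, ∀ n, ‖x n‖ ≤ R := by
  have hpointwise : ∀ v : E, ∃ C, ∀ n, ‖innerSL ℝ (x n) v‖ ≤ C := fun v => by
    obtain ⟨C, hC⟩ := (h v).norm.bddAbove_range
    exact ⟨C, fun n => hC (Set.mem_range_self n)⟩
  obtain ⟨C, hC⟩ := banach_steinhaus hpointwise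
  exact ⟨C, fun n => by simpa only [innerSL_apply_norm] using hC n⟩

theorem tendsto_inner_map_of_tendsto_inner {ι : Type*} {l : Filter ι} {x : ι → E} {y : E}
    (h : ∀ v, Tendsto (fun n => ⟪x n, v⟫) l (𝓝 ⟪y, v⟫)) (B : E →L[ℝ] F) (w : F) :
    Tendsto (fun n => ⟪B (x n), w⟫) l (𝓝 ⟪B y, w⟫) := by
  have hriesz : ∀ z, ⟪z, (InnerProductSpace.toDual ℝ E).symm ((innerSL ℝ w).comp B)⟫ =
      ⟪B z, w⟫ := fun z => by
    rw [real_inner_comm, InnerProductSpace.toDual_symm_apply, real_inner_comm]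
    rfl
  simpa only [hriesz] using h ((InnerProductSpace.toDual ℝ E).symm ((innerSL ℝ w).comp B))

theorem IsCompactOperator.tendsto_of_tendsto_inner {B : E →L[ℝ] F} (hB : IsCompactOperator B)
    {x : ℕ → E} {y : E} (h : ∀ v, Tendsto (fun n => ⟪x n, v⟫) atTop (𝓝 ⟪y, v⟫)) :
    Tendsto (fun n => B (x n)) atTop (𝓝 (B y)) := by
  obtain ⟨R, hR⟩ := exists_norm_le_of_tendsto_inner h
  obtain ⟨K, hK, hBK⟩ := hB.image_closedBall_subset_compact (f := (B : E →ₗ[ℝ] F)) R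
  refine tendsto_of_subseq_tendsto fun ns hns => ?_
  have hmem : ∀ k, B (x (ns k)) ∈ K := fun k =>
    hBK ⟨x (ns k), by simpa using hR (ns k), rfl⟩
  obtain ⟨z, -, φ, hφ, hz⟩ := hK.tendsto_subseq hmem
  have hzB : z = B y := ext_inner_right ℝ fun w =>
    tendsto_nhds_unique (hz.inner tendsto_const_nhds)
      ((tendsto_inner_map_of_tendsto_inner h B w).comp (hns.comp hφ.tendsto_atTop))
  exact ⟨φ, hzB ▸ hz⟩

end WeakConvergence

section QuasiVariational

variable {V : Type*} [NormedAddCommGroup V] [InnerProductSpace ℝ V]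

def IsQuasiVariationalSolution (a : V →ₗ[ℝ] V →ₗ[ℝ] ℝ) (j : V → V → ℝ) (F u : V) : Prop :=
  ∀ v : V, a u (v - u) + j u v - j u u ≥ ⟪F, v - u⟫

variable {a : V →ₗ[ℝ] V →ₗ[ℝ] ℝ} {j : V → V → ℝ} {α : ℝ} {F₁ F₂ u₁ u₂ : V}

theorem IsQuasiVariationalSolution.apply_sub_sub_le
    (hj : ∀ η₁ η₂ v₁ v₂ : V,
      j η₁ v₂ - j η₁ v₁ + j η₂ v₁ - j η₂ v₂ ≤ α * ‖η₁ - η₂‖ * ‖v₁ - v₂‖)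
    (h₁ : IsQuasiVariationalSolution a j F₁ u₁) (h₂ : IsQuasiVariationalSolution a j F₂ u₂) :
    a (u₁ - u₂) (u₁ - u₂) ≤ α * ‖u₁ - u₂‖ * ‖u₁ - u₂‖ + ⟪F₁ - F₂, u₁ - u₂⟫ := by
  have h₁₂ := h₁ u₂
  have h₂₁ := h₂ u₁
  have hj₁₂ := hj u₁ u₂ u₁ u₂
  rw [← neg_sub u₁ u₂] at h₁₂
  simp only [map_sub, LinearMap.sub_apply, map_neg, inner_neg_right, inner_sub_left,
    inner_sub_right] at h₁₂ h₂₁ ⊢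
  linarith

theorem IsQuasiVariationalSolution.mul_norm_sub_le {m : ℝ}
    (hcoer : ∀ v : V, m * ‖v‖ ^ 2 ≤ a v v)
    (hj : ∀ η₁ η₂ v₁ v₂ : V,
      j η₁ v₂ - j η₁ v₁ + j η₂ v₁ - j η₂ v₂ ≤ α * ‖η₁ - η₂‖ * ‖v₁ - v₂‖)
    (h₁ : IsQuasiVariationalSolution a j F₁ u₁) (h₂ : IsQuasiVariationalSolution a j F₂ u₂) :
    (m - α) * ‖u₁ - u₂‖ ≤ ‖F₁ - F₂‖ := by
  rcases (norm_nonneg (u₁ - u₂)).eq_or_lt with hzero | hpos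
  · simp [← hzero]
  have hsq : (m - α) * ‖u₁ - u₂‖ * ‖u₁ - u₂‖ ≤ ‖F₁ - F₂‖ * ‖u₁ - u₂‖ := by
    nlinarith [hcoer (u₁ - u₂), h₁.apply_sub_sub_le hj h₂, real_inner_le_norm (F₁ - F₂) (u₁ - u₂)]
  exact le_of_mul_le_mul_right hsq hpos

end QuasiVariational

theorem stmt15_general {V Y : Type*} [NormedAddCommGroup V] [InnerProductSpace ℝ V]
    [NormedAddCommGroup Y] [InnerProductSpace ℝ Y] [CompleteSpace Y]
    (a : V →ₗ[ℝ] V →ₗ[ℝ] ℝ) (m : ℝ)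
    (hcoer : ∀ v : V, m * ‖v‖ ^ 2 ≤ a v v)
    (j : V → V → ℝ)
    (α : ℝ) (hαm : α < m)
    (hj : ∀ η₁ η₂ v₁ v₂ : V,
      j η₁ v₂ - j η₁ v₁ + j η₂ v₁ - j η₂ v₂ ≤ α * ‖η₁ - η₂‖ * ‖v₁ - v₂‖)
    (B : Y →L[ℝ] V) (hB : IsCompactOperator B)
    (F₀ : V) (fn : ℕ → Y) (f : Y)
    (hfweak : ∀ v : Y, Tendsto (fun n => ⟪fn n, v⟫) atTop (nhds ⟪f, v⟫))
    (un : ℕ → V)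
    (hun : ∀ n, ∀ v : V,
      a (un n) (v - un n) + j (un n) v - j (un n) (un n)
        ≥ ⟪F₀ + B (fn n), v - un n⟫)
    (u : V)
    (hu : ∀ v : V, a u (v - u) + j u v - j u u ≥ ⟪F₀ + B f, v - u⟫) :
    Tendsto (fun n => ⟪B (fn n), un n - u⟫) atTop (nhds 0) ∧
      Tendsto un atTop (nhds u) := by
  have hBfn : Tendsto (fun n => B (fn n)) atTop (𝓝 (B f)) := hB.tendsto_of_tendsto_inner hfweak
  have hstable : ∀ n, ‖un n - u‖ ≤ ‖B (fn n) - B f‖ / (m - α) := fun n => by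
    rw [le_div_iff₀ (sub_pos.mpr hαm), mul_comm, ← add_sub_add_left_eq_sub (B (fn n)) (B f) F₀]
    exact IsQuasiVariationalSolution.mul_norm_sub_le hcoer hj (hun n) hu
  have hun_u : Tendsto un atTop (𝓝 u) := by
    rw [tendsto_iff_norm_sub_tendsto_zero]
    refine squeeze_zero (fun n => norm_nonneg _) hstable ?_
    simpa using ((tendsto_iff_norm_sub_tendsto_zero.mp hBfn).div_const (m - α))
  refine ⟨?_, hun_u⟩
  simpa using hBfn.inner (tendsto_sub_nhds_zero_iff.mpr hun_u)

theorem stmt15 {V Y : Type*} [NormedAddCommGroup V] [InnerProductSpace ℝ V] [CompleteSpace V]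
    [NormedAddCommGroup Y] [InnerProductSpace ℝ Y] [CompleteSpace Y]
    (a : V →ₗ[ℝ] V →ₗ[ℝ] ℝ) (M m : ℝ)
    (hbound : ∀ u v : V, |a u v| ≤ M * ‖u‖ * ‖v‖)
    (hm : 0 < m) (hcoer : ∀ v : V, m * ‖v‖ ^ 2 ≤ a v v)
    (j : V → V → ℝ) (hjpos : ∀ η v : V, 0 ≤ j η v)
    (α : ℝ) (hα : 0 ≤ α) (hαm : α < m)
    (hj : ∀ η₁ η₂ v₁ v₂ : V,
      j η₁ v₂ - j η₁ v₁ + j η₂ v₁ - j η₂ v₂ ≤ α * ‖η₁ - η₂‖ * ‖v₁ - v₂‖)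
    (B : Y →L[ℝ] V) (hB : IsCompactOperator B)
    (F₀ : V) (fn : ℕ → Y) (f : Y)
    (hfweak : ∀ v : Y, Tendsto (fun n => ⟪fn n, v⟫) atTop (nhds ⟪f, v⟫))
    (un : ℕ → V)
    (hun : ∀ n, ∀ v : V,
      a (un n) (v - un n) + j (un n) v - j (un n) (un n)
        ≥ ⟪F₀ + B (fn n), v - un n⟫)
    (u : V)
    (hu : ∀ v : V, a u (v - u) + j u v - j u u ≥ ⟪F₀ + B f, v - u⟫) :
    Tendsto (fun n => ⟪B (fn n), un n - u⟫) atTop (nhds 0) ∧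
      Tendsto un atTop (nhds u) :=
  stmt15_general a m hcoer j α hαm hj B hB F₀ fn f hfweak un hun u hu
end
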